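/- arXiv:1110.5270 — 2 statements merged into one kernel-verified Lean document; each statement's English description precedes it below -/
import Mathlib

section
/- Define Z_n = Y_{n+1} − Y_n − 1 for n ≥ 1. Then for all n ≥ 1, Z_{n+3} = Z_{n+2} + Z_{n+1} + Z_n + 2. -/
open Filter Topology

noncomputable section

/-- Evaluation of a list of (sign, partial quotient) pairs as the continued
fraction `ε₁ / (a₁ + ε₂ / (a₂ + ⋯ + ε_l / a_l))`; the empty list evaluates to `0`. -/
def ocfEval : List (ℤ × ℕ) → ℚ
  | [] => 0
  | (e, a) :: t => (e : ℚ) / ((a : ℚ) + ocfEval t)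

/-- Structural validity of a list of (sign, partial quotient) pairs for an odd
continued fraction: all partial quotients are odd positive integers, all signs
are `±1`, `a_j + ε_{j+1} ≥ 2` for consecutive terms, and the last sign is `1`
whenever the last partial quotient is `1`. -/
def ocfValid : List (ℤ × ℕ) → Prop
  | [] => True
  | [(e, a)] => (e = 1 ∨ e = -1) ∧ Odd a ∧ 0 < a ∧ (a = 1 → e = 1)
  | (e, a) :: (e', a') :: t =>
      (e = 1 ∨ e = -1) ∧ Odd a ∧ 0 < a ∧ 2 ≤ (a : ℤ) + e' ∧ ocfValid ((e', a') :: t)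

/-- `L` is a zero-based odd continued fraction expansion of the rational `x`,
i.e. `x = [0; ε₁/a₁, …, ε_l/a_l]` with first sign `ε₁ = 1`. -/
def ZeroRep (x : ℚ) (L : List (ℤ × ℕ)) : Prop :=
  ocfValid L ∧ (∀ e a t, L = (e, a) :: t → e = 1) ∧ x = ocfEval L

/-- `L` is an odd continued fraction expansion of the rational `x`,
i.e. `x = [1; ε₁/a₁, …, ε_l/a_l] = 1 + ε₁/(a₁ + ⋯)` with first sign `ε₁ = -1`. -/
def OneRep (x : ℚ) (L : List (ℤ × ℕ)) : Prop :=
  ocfValid L ∧ (∀ e a t, L = (e, a) :: t → e = -1) ∧ x = 1 + ocfEval L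

/-- Sum of the partial quotients of a list. -/
def qsum (L : List (ℤ × ℕ)) : ℕ := (L.map Prod.snd).sum

/-- `Sone x`: the sum of the partial quotients of the odd continued fraction
expansion `x = [1; ε₁/a₁, …, ε_l/a_l]` of a rational `x`. -/
def Sone (x : ℚ) : ℕ := sInf (qsum '' {L | OneRep x L})

/-- `Szero x`: the sum of the partial quotients of the zero-based odd continued
fraction expansion `x = [0; ε₁/a₁, …, ε_l/a_l]` of a rational `x`. -/
def Szero (x : ℚ) : ℕ := sInf (qsum '' {L | ZeroRep x L})

/-- `Mset n = {x ∈ ℚ ∩ [0,1] : S(x) ≤ n + 1}`. -/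
def Mset (n : ℕ) : Set ℚ := {x | 0 ≤ x ∧ x ≤ 1 ∧ Sone x ≤ n + 1}

/-- `Yset n = 𝒴_n = {x ∈ ℚ ∩ [0,1] : S⁰(x) ≤ n + 1}`. -/
def Yset (n : ℕ) : Set ℚ := {x | 0 ≤ x ∧ x ≤ 1 ∧ Szero x ≤ n + 1}

/-- `Xset k = 𝒳_k = {x ∈ ℚ ∩ [0,1] : S⁰(x) = k + 1}`. -/
def Xset (k : ℕ) : Set ℚ := {x | 0 ≤ x ∧ x ≤ 1 ∧ Szero x = k + 1}

/-- `Y_n`, the cardinality of `𝒴_n`. -/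
def Ycard (n : ℕ) : ℕ := (Yset n).ncard

/-- `X_k`, the cardinality of `𝒳_k`. -/
def Xcard (k : ℕ) : ℕ := (Xset k).ncard

/-- `Z_n = Y_{n+1} - Y_n - 1`. -/
def Zcard (n : ℕ) : ℤ := (Ycard (n + 1) : ℤ) - (Ycard n : ℤ) - 1

/-- The distribution function `F_n(x) = #{ξ ∈ M_n : ξ ≤ x} / #M_n`. -/
def Fn (n : ℕ) (x : ℝ) : ℝ :=
  ((Mset n ∩ {ξ : ℚ | (ξ : ℝ) ≤ x}).ncard : ℝ) / ((Mset n).ncard : ℝ)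

/-- The distribution function `F⁰_n(x) = #{ξ ∈ 𝒴_n : ξ ≤ x} / Y_n`. -/
def F0n (n : ℕ) (x : ℝ) : ℝ :=
  ((Yset n ∩ {ξ : ℚ | (ξ : ℝ) ≤ x}).ncard : ℝ) / (Ycard n : ℝ)

/-- The limit distribution function `F(x) = lim_{n → ∞} F_n(x)`. -/
def F (x : ℝ) : ℝ := limUnder atTop fun n => Fn n x

/-- The limit distribution function `F⁰(x) = lim_{n → ∞} F⁰_n(x)`. -/
def F0 (x : ℝ) : ℝ := limUnder atTop fun n => F0n n x

/-- The mediant `(a + c) / (b + d)` of two rationals `a/b`, `c/d` in lowest terms. -/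
def mediant (x y : ℚ) : ℚ := ((x.num + y.num : ℤ) : ℚ) / ((x.den + y.den : ℕ) : ℚ)

/-- The Stern–Brocot sequences: `𝔉₀ = {0, 1}` and `𝔉_{n+1}` is obtained from
`𝔉_n` by inserting the mediant of every pair of consecutive elements of `𝔉_n`. -/
def SB : ℕ → Set ℚ
  | 0 => {0, 1}
  | n + 1 => SB n ∪ {z | ∃ x y, x ∈ SB n ∧ y ∈ SB n ∧ x < y ∧
      (∀ t ∈ SB n, t ≤ x ∨ y ≤ t) ∧ z = mediant x y}

/-- `x < y` are consecutive elements of the Stern–Brocot sequence `𝔉_n`. -/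
def SBConsecutive (n : ℕ) (x y : ℚ) : Prop :=
  x ∈ SB n ∧ y ∈ SB n ∧ x < y ∧ ∀ t ∈ SB n, t ≤ x ∨ y ≤ t

/-- Evaluation of an ordinary continued fraction `[0; b₁, …, b_l] = 1/(b₁ + 1/(b₂ + ⋯))`. -/
def cfEval : List ℕ → ℚ
  | [] => 0
  | b :: t => 1 / ((b : ℚ) + cfEval t)

/-!
An expansion is determined by its value: the first sign is the sign of the value, and the
reciprocal `a + [tail]` of its absolute value pins down the odd quotient `a`, because the value of
a valid tail lies in `(-1, 1]`. Conversely every rational `x ∈ (0, 1]` has an expansion: take the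
odd `a` with `x⁻¹ - a ∈ (-1, 1]` and recurse on `|x⁻¹ - a|`, whose denominator is the numerator of
`x`. Hence `X_k` is the number `z (k + 1)` of valid lists with first sign `+1` and quotient sum
`k + 1`, and `Z_n = X_{n+1} - 1`.

Sort these lists of sum `s` by their first quotient `a`. For `a = 1` the next sign must be `+1`,
leaving `z (s - 1)` lists; for `a = 3` any valid tail of sum `s - 3` is allowed, and flipping the
first sign shows there are `2 z (s - 3)` of them when `s - 3 ≥ 2`; lowering `a ≥ 5` to `a - 2 ≥ 3`
leaves the `z (s - 2) - z (s - 3)` lists of sum `s - 2` whose first quotient is not `1`. So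
`z s = z (s - 1) + z (s - 2) + z (s - 3)` for `s ≥ 5`, and the three `-1`s in `Z` give the `+ 2`.
-/

@[simp]
theorem qsum_nil : qsum [] = 0 := rfl

@[simp]
theorem qsum_cons (e : ℤ) (a : ℕ) (t : List (ℤ × ℕ)) :
    qsum ((e, a) :: t) = a + qsum t := by
  simp [qsum]

def FirstSignOne (L : List (ℤ × ℕ)) : Prop := ∀ e a t, L = (e, a) :: t → e = 1

@[simp]
theorem firstSignOne_nil : FirstSignOne [] := by
  simp [FirstSignOne]

@[simp]
theorem firstSignOne_cons {e : ℤ} {a : ℕ} {t : List (ℤ × ℕ)} :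
    FirstSignOne ((e, a) :: t) ↔ e = 1 := by
  simp [FirstSignOne]

section Valid

variable {e : ℤ} {a : ℕ} {t L : List (ℤ × ℕ)}

theorem ocfValid.sign (h : ocfValid ((e, a) :: t)) : e = 1 ∨ e = -1 := by
  cases t <;> exact h.1

theorem ocfValid.odd (h : ocfValid ((e, a) :: t)) : Odd a := by
  cases t <;> exact h.2.1

theorem ocfValid.of_cons {p : ℤ × ℕ} (h : ocfValid (p :: t)) : ocfValid t := by
  match p, t with
  | _, [] => trivial
  | (_, _), _ :: _ => exact h.2.2.2.2

theorem ocfValid.sign_and_odd_of_mem (h : ocfValid L) {p : ℤ × ℕ} (hp : p ∈ L) :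
    (p.1 = 1 ∨ p.1 = -1) ∧ Odd p.2 := by
  induction L with
  | nil => simp at hp
  | cons q t ih =>
    obtain ⟨e, a⟩ := q
    rcases List.mem_cons.1 hp with rfl | hp
    · exact ⟨h.sign, h.odd⟩
    · exact ih h.of_cons hp

theorem ocfValid_cons_iff_of_three_le (he : e = 1 ∨ e = -1) (ha : Odd a) (h3 : 3 ≤ a) :
    ocfValid ((e, a) :: t) ↔ ocfValid t := by
  refine ⟨ocfValid.of_cons, fun ht => ?_⟩
  match t, ht with
  | [], _ => exact ⟨he, ha, by omega, by omega⟩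
  | (_, _) :: _, ht => exact ⟨he, ha, by omega, by rcases ht.sign with rfl | rfl <;> omega, ht⟩

theorem ocfValid_cons_neg_iff (h : t ≠ [] ∨ a ≠ 1) :
    ocfValid ((-e, a) :: t) ↔ ocfValid ((e, a) :: t) := by
  cases t <;> simp only [ocfValid] <;> grind

theorem ocfValid_one_one_cons : ocfValid ((1, 1) :: t) ↔ ocfValid t ∧ FirstSignOne t := by
  match t with
  | [] => simp [ocfValid]
  | (e, a) :: t =>
    simp only [ocfValid, firstSignOne_cons]
    constructor
    · rintro ⟨-, -, -, h2, ht⟩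
      exact ⟨ht, by rcases ht.sign with rfl | rfl <;> omega⟩
    · rintro ⟨ht, rfl⟩
      exact ⟨by norm_num, odd_one, one_pos, by norm_num, ht⟩

theorem ocfValid.one_le_denom (h : ocfValid ((e, a) :: t)) :
    1 ≤ (a : ℚ) + ocfEval t ∧ (e = -1 → 1 < (a : ℚ) + ocfEval t) := by
  induction t generalizing e a with
  | nil =>
    have ha : 1 ≤ a := h.odd.pos
    simp only [ocfEval, add_zero]
    refine ⟨by exact_mod_cast ha, fun he => ?_⟩
    have : a ≠ 1 := fun ha1 => by have := h.2.2.2 ha1; omega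
    exact_mod_cast (by omega : 1 < a)
  | cons p t ih =>
    obtain ⟨e', a'⟩ := p
    have hlink : 2 ≤ (a : ℤ) + e' := h.2.2.2.1
    obtain ⟨hw, hw'⟩ := ih h.of_cons
    have ha : (1 : ℚ) ≤ a := by exact_mod_cast h.odd.pos
    have hlt : 1 < (a : ℚ) + ocfEval ((e', a') :: t) := by
      rw [ocfEval]
      rcases h.of_cons.sign with rfl | rfl
      · have : 0 < ((1 : ℤ) : ℚ) / (a' + ocfEval t) := by push_cast; positivity
        linarith
      · have ha3 : (3 : ℚ) ≤ a := by exact_mod_cast (by omega : 3 ≤ a)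
        have : -1 < ((-1 : ℤ) : ℚ) / (a' + ocfEval t) := by
          rw [lt_div_iff₀ (by linarith)]; push_cast; linarith [hw' rfl]
        linarith
    exact ⟨hlt.le, fun _ => hlt⟩

theorem ocfValid.ocfEval_mem_Ioc_of_sign_one (h : ocfValid ((1, a) :: t)) :
    ocfEval ((1, a) :: t) ∈ Set.Ioc 0 1 := by
  have hw := h.one_le_denom.1
  simp only [ocfEval, Int.cast_one]
  exact ⟨by positivity, (div_le_one (by linarith)).2 hw⟩

theorem ocfValid.ocfEval_mem_Ioo_of_sign_neg_one (h : ocfValid ((-1, a) :: t)) :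
    ocfEval ((-1, a) :: t) ∈ Set.Ioo (-1) 0 := by
  have hw := h.one_le_denom.2 rfl
  simp only [ocfEval, Int.cast_neg, Int.cast_one, neg_div]
  exact ⟨neg_lt_neg ((div_lt_one (by linarith)).2 hw), neg_neg_of_pos (by positivity)⟩

theorem ocfValid.ocfEval_mem_Ioc (h : ocfValid L) : ocfEval L ∈ Set.Ioc (-1) 1 := by
  match L, h with
  | [], _ => simp [ocfEval]
  | (e, a) :: t, h =>
    rcases h.sign with rfl | rfl
    · exact Set.Ioc_subset_Ioc_left (by norm_num) h.ocfEval_mem_Ioc_of_sign_one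
    · exact Set.Ioo_subset_Ioc_self.trans (Set.Ioc_subset_Ioc_right (by norm_num))
        h.ocfEval_mem_Ioo_of_sign_neg_one

theorem ocfValid.ocfEval_pos_iff (h : ocfValid ((e, a) :: t)) :
    0 < ocfEval ((e, a) :: t) ↔ e = 1 := by
  rcases h.sign with rfl | rfl
  · simpa using h.ocfEval_mem_Ioc_of_sign_one.1
  · simpa using h.ocfEval_mem_Ioo_of_sign_neg_one.2.le

theorem ocfValid.ocfEval_ne_zero (h : ocfValid ((e, a) :: t)) : ocfEval ((e, a) :: t) ≠ 0 := by
  rcases h.sign with rfl | rfl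
  · exact h.ocfEval_mem_Ioc_of_sign_one.1.ne'
  · exact h.ocfEval_mem_Ioo_of_sign_neg_one.2.ne

end Valid

theorem ocfEval_injOn : Set.InjOn ocfEval {L | ocfValid L} := by
  intro L hL M hM hLM
  induction L generalizing M with
  | nil =>
    match M, hM with
    | [], _ => rfl
    | (_, _) :: _, hM => exact absurd hLM.symm hM.ocfEval_ne_zero
  | cons p t ih =>
    obtain ⟨e, a⟩ := p
    match M, hM with
    | [], _ => exact absurd hLM hL.ocfEval_ne_zero
    | (e', a') :: t', hM =>
      have hL : ocfValid ((e, a) :: t) := hL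
      have hee : e = e' := by
        have := hL.ocfEval_pos_iff; rw [hLM, hM.ocfEval_pos_iff] at this
        rcases hL.sign with rfl | rfl <;> rcases hM.sign with rfl | rfl <;> simp_all
      subst hee
      have hw := hL.one_le_denom.1
      have hw' := hM.one_le_denom.1
      have he : (e : ℚ) ≠ 0 := by rcases hL.sign with rfl | rfl <;> norm_num
      have hden : (a : ℚ) + ocfEval t = a' + ocfEval t' := by
        simp only [ocfEval] at hLM
        rw [div_eq_div_iff (by linarith) (by linarith)] at hLM
        exact mul_left_cancel₀ he hLM.symm
      -- two odd numbers closer than 2 are equal, since both tails lie in `(-1, 1]`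
      have haa : a = a' := by
        obtain ⟨h1, h2⟩ := hL.of_cons.ocfEval_mem_Ioc
        obtain ⟨h1', h2'⟩ := hM.of_cons.ocfEval_mem_Ioc
        have c1 : (a : ℚ) < a' + 2 := by linarith
        have c2 : (a' : ℚ) < a + 2 := by linarith
        obtain ⟨k, rfl⟩ := hL.odd
        obtain ⟨k', rfl⟩ := hM.odd
        norm_cast at c1 c2
        omega
      subst haa
      rw [ih hL.of_cons hM.of_cons (by linarith)]

theorem exists_odd_sub_mem_Ioc {K : Type*} [Field K] [LinearOrder K] [IsStrictOrderedRing K]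
    [FloorSemiring K] {r : K} (hr : 1 ≤ r) : ∃ a : ℕ, Odd a ∧ r - a ∈ Set.Ioc (-1) 1 := by
  have hle : r ≤ ⌈r⌉₊ := Nat.le_ceil r
  have hlt : (⌈r⌉₊ : K) < r + 1 := Nat.ceil_lt_add_one (by linarith)
  rcases Nat.even_or_odd ⌈r⌉₊ with hm | hm
  · have h1 : 0 < ⌈r⌉₊ := Nat.ceil_pos.2 (by linarith)
    refine ⟨⌈r⌉₊ - 1, Nat.Even.sub_odd h1 hm odd_one, ?_⟩
    push_cast [Nat.cast_sub h1]
    constructor <;> linarith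
  · exact ⟨⌈r⌉₊, hm, by constructor <;> linarith⟩

theorem den_abs_inv_sub_natCast_lt {x : ℚ} (hx0 : 0 < x) (hx1 : x < 1) (a : ℕ) :
    |x⁻¹ - a|.den < x.den := by
  rw [Rat.den_abs_eq_den, Rat.sub_natCast_den, Rat.den_inv_of_ne_zero hx0.ne']
  have := Rat.num_lt_denom_iff.2 hx1
  have := Rat.num_pos.2 hx0
  omega

theorem exists_ocfValid_ocfEval_eq (x : ℚ) (hx0 : 0 < x) (hx1 : x ≤ 1) :
    ∃ a t, ocfValid ((1, a) :: t) ∧ ocfEval ((1, a) :: t) = x := by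
  induction hd : x.den using Nat.strong_induction_on generalizing x with
  | _ d ih =>
  rcases hx1.eq_or_lt with rfl | hx1
  · exact ⟨1, [], by simp [ocfValid], by simp [ocfEval]⟩
  obtain ⟨a, ha, hv⟩ := exists_odd_sub_mem_Ioc (one_le_inv_iff₀.2 ⟨hx0, hx1.le⟩)
  set v := x⁻¹ - a
  have hx : x = 1 / (a + v) := by simp [v]
  rcases eq_or_ne v 0 with hv0 | hv0
  · exact ⟨a, [], ⟨Or.inl rfl, ha, ha.pos, fun _ => rfl⟩, by simp [ocfEval, hx, hv0]⟩
  obtain ⟨b, t, hbt, hev⟩ := ih _ (hd ▸ den_abs_inv_sub_natCast_lt hx0 hx1 a) |v|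
    (abs_pos.2 hv0) (abs_le.2 ⟨hv.1.le, hv.2⟩) rfl
  rcases hv0.lt_or_gt with hneg | hpos
  · have ha3 : 3 ≤ a := by
      obtain ⟨_ | k, rfl⟩ := ha
      · have := one_lt_inv₀ hx0 |>.2 hx1
        simp only [v] at hneg
        push_cast at hneg
        linarith
      · omega
    have hbt' : ocfValid ((-1, b) :: t) := by
      refine (ocfValid_cons_neg_iff ?_).2 hbt
      by_contra! h
      obtain ⟨rfl, rfl⟩ := h
      have : |v| = 1 := by rw [← hev]; norm_num [ocfEval]
      rw [abs_of_neg hneg] at this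
      linarith [hv.1]
    refine ⟨a, (-1, b) :: t, (ocfValid_cons_iff_of_three_le (Or.inl rfl) ha ha3).2 hbt', ?_⟩
    have : ocfEval ((-1, b) :: t) = v := by
      rw [← neg_neg v, ← abs_of_neg hneg, ← hev]; simp [ocfEval, neg_div]
    rw [ocfEval, this, hx]; simp
  · refine ⟨a, (1, b) :: t, ⟨Or.inl rfl, ha, ha.pos, by have := ha.pos; omega, hbt⟩, ?_⟩
    rw [ocfEval, hev, abs_of_pos hpos, hx]; simp

theorem ZeroRep.mem_Icc {x : ℚ} {L : List (ℤ × ℕ)} (h : ZeroRep x L) :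
    x ∈ Set.Icc 0 1 := by
  obtain ⟨hv, hs, rfl⟩ := h
  match L, hv with
  | [], _ => simp [ocfEval]
  | (e, a) :: t, hv =>
    obtain rfl : e = 1 := hs e a t rfl
    exact Set.Ioc_subset_Icc_self hv.ocfEval_mem_Ioc_of_sign_one

theorem exists_zeroRep {x : ℚ} (hx : x ∈ Set.Icc 0 1) : ∃ L, ZeroRep x L := by
  rcases hx.1.eq_or_lt with rfl | hx0
  · exact ⟨[], trivial, by simp, rfl⟩
  · obtain ⟨a, t, hv, rfl⟩ := exists_ocfValid_ocfEval_eq x hx0 hx.2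
    exact ⟨(1, a) :: t, hv, by simp, rfl⟩

theorem ZeroRep.Szero_eq {x : ℚ} {L : List (ℤ × ℕ)} (h : ZeroRep x L) :
    Szero x = qsum L := by
  have : {L' | ZeroRep x L'} = {L} := Set.eq_singleton_iff_unique_mem.2
    ⟨h, fun L' h' => ocfEval_injOn h'.1 h.1 (h'.2.2.symm.trans h.2.2)⟩
  rw [Szero, this, Set.image_singleton, csInf_singleton]

theorem finite_setOf_ocfValid_qsum_le (m : ℕ) : {L | ocfValid L ∧ qsum L ≤ m}.Finite := by
  let S : Set (ℤ × ℕ) := {-1, 1} ×ˢ Set.Iic m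
  have : Finite S := ((Set.toFinite _).prod (Set.finite_Iic m)).to_subtype
  refine ((List.finite_length_le S m).image (List.map Subtype.val)).subset ?_
  rintro L ⟨hL, hq⟩
  have hle : ∀ p ∈ L, p.2 ≤ qsum L := fun p hp => List.le_sum_of_mem (List.mem_map_of_mem hp)
  lift L to List S using fun p hp => ⟨(hL.sign_and_odd_of_mem hp).1.symm, (hle p hp).trans hq⟩
  refine ⟨L, ?_, rfl⟩
  calc L.length = ((L.map Subtype.val).map Prod.snd).length := by simp
    _ ≤ qsum (L.map Subtype.val) := List.length_le_sum_of_one_le _ fun i hi => by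
        obtain ⟨p, hp, rfl⟩ := List.mem_map.1 hi
        exact (hL.sign_and_odd_of_mem hp).2.pos
    _ ≤ m := hq

def ocfListsOfSum (s : ℕ) : Set (List (ℤ × ℕ)) := {L | ocfValid L ∧ qsum L = s}

def zeroOcfListsOfSum (s : ℕ) : Set (List (ℤ × ℕ)) :=
  {L | ocfValid L ∧ FirstSignOne L ∧ qsum L = s}

def wideHeadListsOfSum (s : ℕ) : Set (List (ℤ × ℕ)) :=
  {L | ocfValid L ∧ qsum L = s ∧ ∃ a t, 3 ≤ a ∧ L = (1, a) :: t}

theorem finite_ocfListsOfSum (s : ℕ) : (ocfListsOfSum s).Finite :=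
  (finite_setOf_ocfValid_qsum_le s).subset fun _ h => ⟨h.1, h.2.le⟩

theorem finite_zeroOcfListsOfSum (s : ℕ) : (zeroOcfListsOfSum s).Finite :=
  (finite_ocfListsOfSum s).subset fun _ h => ⟨h.1, h.2.2⟩

theorem finite_wideHeadListsOfSum (s : ℕ) : (wideHeadListsOfSum s).Finite :=
  (finite_ocfListsOfSum s).subset fun _ h => ⟨h.1, h.2.1⟩

def flipHead : List (ℤ × ℕ) → List (ℤ × ℕ)
  | [] => []
  | (e, a) :: t => (-e, a) :: t

theorem flipHead_involutive : Function.Involutive flipHead := by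
  rintro (_ | ⟨⟨e, a⟩, t⟩) <;> simp [flipHead]

def bumpHead : List (ℤ × ℕ) → List (ℤ × ℕ)
  | [] => []
  | (e, a) :: t => (e, a + 2) :: t

theorem bumpHead_injective : Function.Injective bumpHead := by
  rintro (_ | ⟨⟨e, a⟩, t⟩) (_ | ⟨⟨e', a'⟩, t'⟩) h <;> simp_all [bumpHead]

theorem ocfListsOfSum_eq_union {s : ℕ} (hs : 2 ≤ s) : ocfListsOfSum s =
    zeroOcfListsOfSum s ∪ flipHead '' zeroOcfListsOfSum s := by
  rw [flipHead_involutive.image_eq_preimage_symm]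
  ext L
  match L with
  | [] => simp [ocfListsOfSum, zeroOcfListsOfSum, flipHead]
  | (e, a) :: t =>
    by_cases hq : a + qsum t = s
    · have hne : t ≠ [] ∨ a ≠ 1 := by
        by_contra! h; obtain ⟨rfl, rfl⟩ := h; simp at hq; omega
      simp only [ocfListsOfSum, zeroOcfListsOfSum, Set.mem_union, Set.mem_preimage,
        Set.mem_ofPred_eq, flipHead, firstSignOne_cons, qsum_cons, ocfValid_cons_neg_iff hne, hq,
        and_true]
      constructor
      · intro h; rcases h.sign with rfl | rfl <;> simp [h]
      · rintro (⟨h, -⟩ | ⟨h, -⟩) <;> exact h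
    · simp [ocfListsOfSum, zeroOcfListsOfSum, flipHead, hq]

theorem ncard_ocfListsOfSum {s : ℕ} (hs : 2 ≤ s) :
    (ocfListsOfSum s).ncard = 2 * (zeroOcfListsOfSum s).ncard := by
  rw [ocfListsOfSum_eq_union hs, Set.ncard_union_eq ?_ (finite_zeroOcfListsOfSum s)
    ((finite_zeroOcfListsOfSum s).image _),
    Set.ncard_image_of_injective _ flipHead_involutive.injective]
  · ring
  rw [Set.disjoint_left]
  rintro _ ⟨-, h, hq⟩ ⟨L, ⟨-, h', -⟩, rfl⟩
  match L with
  | [] => simp [flipHead] at hq; omega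
  | (e, a) :: t => simp only [flipHead, firstSignOne_cons] at h h'; omega

theorem zeroOcfListsOfSum_succ (s : ℕ) : zeroOcfListsOfSum (s + 1) =
    List.cons (1, 1) '' zeroOcfListsOfSum s ∪ wideHeadListsOfSum (s + 1) := by
  ext L
  match L with
  | [] => simp [zeroOcfListsOfSum, wideHeadListsOfSum]
  | (e, a) :: t =>
    simp only [zeroOcfListsOfSum, wideHeadListsOfSum, Set.mem_ofPred_eq, firstSignOne_cons,
      qsum_cons, exists_and_left, Set.mem_union, Set.mem_image, List.cons.injEq, Prod.mk.injEq,
      exists_eq_right_right, ↓existsAndEq, and_true, exists_eq_right_right']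
    constructor
    · rintro ⟨h, rfl, hq⟩
      obtain ⟨k, rfl⟩ := h.odd
      rcases k.eq_zero_or_pos with rfl | hk
      · have := ocfValid_one_one_cons.1 h
        exact Or.inl ⟨⟨this.1, this.2, by omega⟩, rfl, rfl⟩
      · exact Or.inr ⟨h, hq, by omega, rfl⟩
    · rintro (⟨⟨h, hs, hq⟩, rfl, rfl⟩ | ⟨h, hq, -, rfl⟩)
      · exact ⟨ocfValid_one_one_cons.2 ⟨h, hs⟩, rfl, by omega⟩
      · exact ⟨h, rfl, hq⟩

theorem wideHeadListsOfSum_add_three (s : ℕ) : wideHeadListsOfSum (s + 3) =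
    List.cons (1, 3) '' ocfListsOfSum s ∪ bumpHead '' wideHeadListsOfSum (s + 1) := by
  ext L
  match L with
  | [] => simp [ocfListsOfSum, wideHeadListsOfSum, bumpHead]
  | (e, a) :: t =>
    simp only [ocfListsOfSum, wideHeadListsOfSum, Set.mem_ofPred_eq, qsum_cons, exists_and_left,
      Set.mem_union, Set.mem_image, List.cons.injEq, Prod.mk.injEq, exists_eq_right_right,
      ↓existsAndEq, and_true, exists_eq_right_right']
    constructor
    · rintro ⟨h, hq, h3, rfl⟩
      rcases h3.eq_or_lt with rfl | h5
      · refine Or.inl ⟨⟨?_, by omega⟩, rfl, rfl⟩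
        exact (ocfValid_cons_iff_of_three_le (Or.inl rfl) h.odd le_rfl).1 h
      · have h5 : 5 ≤ a := by obtain ⟨k, rfl⟩ := h.odd; omega
        have hodd : Odd (a - 2) := Nat.Odd.sub_even (by omega) h.odd even_two
        refine Or.inr ⟨a - 2, t, ⟨?_, by omega, by omega⟩, by simp [bumpHead]; omega⟩
        exact (ocfValid_cons_iff_of_three_le (Or.inl rfl) hodd (by omega)).2 h.of_cons
    · rintro (⟨⟨h, hq⟩, rfl, rfl⟩ | ⟨b, t', ⟨h, hq, h3⟩, heq⟩)
      · exact ⟨(ocfValid_cons_iff_of_three_le (Or.inl rfl) (by decide) le_rfl).2 h, by omega,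
          le_rfl, rfl⟩
      · simp only [bumpHead, List.cons.injEq, Prod.mk.injEq] at heq
        obtain ⟨⟨rfl, rfl⟩, rfl⟩ := heq
        refine ⟨(ocfValid_cons_iff_of_three_le (Or.inl rfl) (h.odd.add_even even_two)
          (by omega)).2 h.of_cons, by omega, by omega, rfl⟩

theorem ncard_zeroOcfListsOfSum_succ (s : ℕ) : (zeroOcfListsOfSum (s + 1)).ncard =
    (zeroOcfListsOfSum s).ncard + (wideHeadListsOfSum (s + 1)).ncard := by
  rw [zeroOcfListsOfSum_succ, Set.ncard_union_eq ?_ ((finite_zeroOcfListsOfSum s).image _)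
    (finite_wideHeadListsOfSum _), Set.ncard_image_of_injective _ List.cons_injective]
  rw [Set.disjoint_left]
  rintro _ ⟨t, -, rfl⟩ ⟨-, -, a, t', h3, heq⟩
  simp only [List.cons.injEq, Prod.mk.injEq] at heq
  omega

theorem ncard_wideHeadListsOfSum_add_three (s : ℕ) : (wideHeadListsOfSum (s + 3)).ncard =
    (ocfListsOfSum s).ncard + (wideHeadListsOfSum (s + 1)).ncard := by
  rw [wideHeadListsOfSum_add_three, Set.ncard_union_eq ?_ ((finite_ocfListsOfSum s).image _)
    ((finite_wideHeadListsOfSum _).image _), Set.ncard_image_of_injective _ List.cons_injective,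
    Set.ncard_image_of_injective _ bumpHead_injective]
  rw [Set.disjoint_left]
  rintro _ ⟨t, -, rfl⟩ ⟨_, ⟨-, -, a, t', h3, rfl⟩, heq⟩
  simp only [bumpHead, List.cons.injEq, Prod.mk.injEq] at heq
  omega

theorem ncard_zeroOcfListsOfSum_add_five (s : ℕ) : (zeroOcfListsOfSum (s + 5)).ncard =
    (zeroOcfListsOfSum (s + 4)).ncard + (zeroOcfListsOfSum (s + 3)).ncard +
      (zeroOcfListsOfSum (s + 2)).ncard := by
  have h5 : (zeroOcfListsOfSum (s + 5)).ncard =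
      (zeroOcfListsOfSum (s + 4)).ncard + (wideHeadListsOfSum (s + 5)).ncard :=
    ncard_zeroOcfListsOfSum_succ (s + 4)
  have h3 : (zeroOcfListsOfSum (s + 3)).ncard =
      (zeroOcfListsOfSum (s + 2)).ncard + (wideHeadListsOfSum (s + 3)).ncard :=
    ncard_zeroOcfListsOfSum_succ (s + 2)
  have hw : (wideHeadListsOfSum (s + 5)).ncard =
      (ocfListsOfSum (s + 2)).ncard + (wideHeadListsOfSum (s + 3)).ncard :=
    ncard_wideHeadListsOfSum_add_three (s + 2)
  have hc := ncard_ocfListsOfSum (show 2 ≤ s + 2 by omega)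
  omega

theorem Xset_eq_image (k : ℕ) : Xset k = ocfEval '' zeroOcfListsOfSum (k + 1) := by
  ext x
  constructor
  · rintro ⟨h0, h1, hS⟩
    obtain ⟨L, hL⟩ := exists_zeroRep ⟨h0, h1⟩
    exact ⟨L, ⟨hL.1, hL.2.1, hL.Szero_eq ▸ hS⟩, hL.2.2.symm⟩
  · rintro ⟨L, ⟨hv, hs, hq⟩, rfl⟩
    have hL : ZeroRep (ocfEval L) L := ⟨hv, hs, rfl⟩
    exact ⟨hL.mem_Icc.1, hL.mem_Icc.2, hL.Szero_eq.trans hq⟩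

theorem Xcard_eq (k : ℕ) : Xcard k = (zeroOcfListsOfSum (k + 1)).ncard := by
  rw [Xcard, Xset_eq_image, (ocfEval_injOn.mono fun _ h => h.1).ncard_image]

theorem finite_Yset (n : ℕ) : (Yset n).Finite := by
  refine ((finite_setOf_ocfValid_qsum_le (n + 1)).image ocfEval).subset ?_
  rintro x ⟨h0, h1, hS⟩
  obtain ⟨L, hL⟩ := exists_zeroRep ⟨h0, h1⟩
  exact ⟨L, ⟨hL.1, hL.Szero_eq ▸ hS⟩, hL.2.2.symm⟩

theorem Ycard_succ (n : ℕ) : Ycard (n + 1) = Ycard n + Xcard (n + 1) := by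
  have : Yset (n + 1) = Yset n ∪ Xset (n + 1) := by
    ext x; simp only [Yset, Xset, Set.mem_union, Set.mem_ofPred_eq, Nat.le_succ_iff]; tauto
  unfold Ycard Xcard
  rw [this, Set.ncard_union_eq ?_ (finite_Yset n)
    ((finite_Yset (n + 1)).subset fun x h => ⟨h.1, h.2.1, h.2.2.le⟩)]
  rw [Set.disjoint_left]
  rintro x ⟨-, -, h⟩ ⟨-, -, h'⟩
  omega

theorem Zcard_eq (n : ℕ) : Zcard n = Xcard (n + 1) - 1 := by
  rw [Zcard, Ycard_succ]; push_cast; ring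

theorem Xcard_add_four (k : ℕ) :
    Xcard (k + 4) = Xcard (k + 3) + Xcard (k + 2) + Xcard (k + 1) := by
  simp only [Xcard_eq]
  exact ncard_zeroOcfListsOfSum_add_five k

theorem thm11_general (n : ℕ) :
    Zcard (n + 3) = Zcard (n + 2) + Zcard (n + 1) + Zcard n + 2 := by
  simp only [Zcard_eq, Nat.add_assoc, Nat.reduceAdd, Xcard_add_four n]
  push_cast
  ring

/-- With `Z_n = Y_{n+1} − Y_n − 1`, for all `n ≥ 1` one has
`Z_{n+3} = Z_{n+2} + Z_{n+1} + Z_n + 2`. -/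
theorem thm11 (n : ℕ) (hn : 1 ≤ n) :
    Zcard (n + 3) = Zcard (n + 2) + Zcard (n + 1) + Zcard n + 2 :=
  thm11_general n

end
end

section
/- Let λ be the unique real root of λ³ − λ² − λ − 1 = 0 and Z_n = Y_{n+1} − Y_n − 1. Then lim_{n→∞} Y_n / Y_{n+1} = 1/λ, lim_{n→∞} Z_n / Z_{n+1} = 1/λ, and lim_{n→∞} Y_n / Z_n = 1/(λ − 1). -/
open Filter Topology

noncomputable section

/-! Writing `x = [0; ε₁/a₁, …]`, the set `𝒴_n` corresponds to the empty expansion together with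
the valid expansions with `ε₁ = 1` and `∑ aᵢ ≤ n + 1`; so `Y_n = r_n + 1`, where `r_n` counts
the latter. Sorting these by their first partial quotient (`a₁ = 1`; `a₁ ≥ 3` with `a₁ - 2` still
admissible; `a₁ = 3` followed by the sign `-1`) and flipping leading signs gives the tribonacci
recurrence `r_{n+3} = r_{n+2} + r_{n+1} + r_n`. The two other roots of `x³ - x² - x - 1` have
modulus `λ^(-1/2) < 1`, hence `r_{n+1} - λ r_n → 0`; since `r_n → ∞` and
`Z_n = r_{n+1} - r_n - 1`, all three limits follow. -/

namespace OCF

theorem ocfValid_cons_iff {e : ℤ} {a : ℕ} {t : List (ℤ × ℕ)} :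
    ocfValid ((e, a) :: t) ↔ (e = 1 ∨ e = -1) ∧ Odd a ∧ 0 < a ∧ (t = [] → a = 1 → e = 1) ∧
      (∀ p ∈ t.head?, 2 ≤ (a : ℤ) + p.1) ∧ ocfValid t := by
  rcases t with _ | ⟨⟨e', a'⟩, u⟩ <;> simp [ocfValid]

section Valid

variable {e : ℤ} {a : ℕ} {t : List (ℤ × ℕ)}

theorem ocfValid_sign (h : ocfValid ((e, a) :: t)) : e = 1 ∨ e = -1 :=
  (ocfValid_cons_iff.1 h).1

theorem ocfValid_odd (h : ocfValid ((e, a) :: t)) : Odd a :=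
  (ocfValid_cons_iff.1 h).2.1

theorem ocfValid_pos (h : ocfValid ((e, a) :: t)) : 0 < a :=
  (ocfValid_cons_iff.1 h).2.2.1

theorem ocfValid_tail (h : ocfValid ((e, a) :: t)) : ocfValid t :=
  (ocfValid_cons_iff.1 h).2.2.2.2.2

theorem ocfValid_sign_eq_one_of_singleton (h : ocfValid [(e, 1)]) : e = 1 :=
  h.2.2.2 rfl

theorem ocfValid_two_le_add {e' : ℤ} {a' : ℕ} (h : ocfValid ((e, a) :: (e', a') :: t)) :
    2 ≤ (a : ℤ) + e' :=
  h.2.2.2.1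

theorem ocfValid_neg_one_cons_iff {b : ℕ} {u : List (ℤ × ℕ)} :
    ocfValid ((-1, b) :: u) ↔ ocfValid ((1, b) :: u) ∧ (u = [] → b ≠ 1) := by
  simp only [ocfValid_cons_iff]
  grind

end Valid

theorem cast_mul_self_eq_one_of_sign {e : ℤ} (he : e = 1 ∨ e = -1) : (e : ℚ) * e = 1 := by
  rcases he with rfl | rfl <;> norm_num

theorem one_le_add_ocfEval : ∀ {e : ℤ} {a : ℕ} {t : List (ℤ × ℕ)}, ocfValid ((e, a) :: t) →
    1 ≤ (a : ℚ) + ocfEval t ∧ ((a : ℚ) + ocfEval t = 1 → a = 1 ∧ t = [])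
  | e, a, [], h => by
    have : (1 : ℚ) ≤ a := by exact_mod_cast ocfValid_pos h
    simp only [ocfEval, add_zero, Nat.cast_eq_one, and_true]
    exact ⟨this, id⟩
  | e, a, (e', a') :: u, h => by
    obtain ⟨hD, hD1⟩ := one_le_add_ocfEval (ocfValid_tail h)
    have ha : (1 : ℚ) ≤ a := by exact_mod_cast ocfValid_pos h
    have hc := ocfValid_two_le_add h
    rcases ocfValid_sign (ocfValid_tail h) with rfl | rfl
    · have : 0 < ocfEval ((1, a') :: u) := by simp only [ocfEval]; push_cast; positivity
      constructor <;> [linarith; (intro; linarith)]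
    · -- `[0; -1/1]` is not valid, so the tail exceeds `-1`; and the coupling forces `a ≥ 3`
      have hD' : 1 < (a' : ℚ) + ocfEval u := by
        refine lt_of_le_of_ne hD fun h1 => ?_
        obtain ⟨rfl, rfl⟩ := hD1 h1.symm
        exact absurd (ocfValid_sign_eq_one_of_singleton (ocfValid_tail h)) (by norm_num)
      have : -1 < ocfEval ((-1, a') :: u) := by
        simp only [ocfEval]; push_cast
        rw [neg_div, neg_lt_neg_iff, div_lt_one (by linarith)]; exact hD'
      have : (3 : ℚ) ≤ a := by exact_mod_cast (by omega : (3 : ℤ) ≤ a)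
      constructor <;> [linarith; (intro; linarith)]

theorem sign_mul_ocfEval_cons {e : ℤ} {a : ℕ} {t : List (ℤ × ℕ)} (h : ocfValid ((e, a) :: t)) :
    (e : ℚ) * ocfEval ((e, a) :: t) = ((a : ℚ) + ocfEval t)⁻¹ := by
  rw [ocfEval, mul_div_assoc', cast_mul_self_eq_one_of_sign (ocfValid_sign h), one_div]

theorem ocfEval_mem_Ioc {L : List (ℤ × ℕ)} (h : ocfValid L) : ocfEval L ∈ Set.Ioc (-1) 1 := by
  rcases L with _ | ⟨⟨e, a⟩, t⟩
  · simp [ocfEval]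
  obtain ⟨hD, hD1⟩ := one_le_add_ocfEval h
  have hinv : ((a : ℚ) + ocfEval t)⁻¹ ∈ Set.Ioc 0 1 := ⟨by positivity, inv_le_one_of_one_le₀ hD⟩
  rw [← sign_mul_ocfEval_cons h] at hinv
  rcases ocfValid_sign h with rfl | rfl
  · simp only [Int.cast_one, one_mul] at hinv
    exact ⟨by linarith [hinv.1], hinv.2⟩
  · simp only [Int.cast_neg, Int.cast_one, neg_one_mul, Set.mem_Ioc, neg_pos] at hinv
    refine ⟨lt_of_le_of_ne (by linarith) fun h1 => ?_, by linarith⟩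
    obtain ⟨rfl, rfl⟩ := hD1 (by rw [← inv_eq_one, ← sign_mul_ocfEval_cons h, ← h1]; norm_num)
    exact absurd (ocfValid_sign_eq_one_of_singleton h) (by norm_num)

theorem ocfEval_pos {a : ℕ} {t : List (ℤ × ℕ)} (h : ocfValid ((1, a) :: t)) :
    0 < ocfEval ((1, a) :: t) := by
  have hD := (one_le_add_ocfEval h).1
  simp only [ocfEval, Int.cast_one]
  positivity

theorem ocfEval_cons_ne_zero {e : ℤ} {a : ℕ} {t : List (ℤ × ℕ)} (h : ocfValid ((e, a) :: t)) :
    ocfEval ((e, a) :: t) ≠ 0 := by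
  have hD := (one_le_add_ocfEval h).1
  intro h0
  have := sign_mul_ocfEval_cons h
  rw [h0, mul_zero, eq_comm, inv_eq_zero] at this
  linarith

theorem ocfEval_injOn : Set.InjOn ocfEval {L | ocfValid L} := by
  intro L hL M hM hLM
  induction L generalizing M with
  | nil =>
    rcases M with _ | ⟨⟨f, b⟩, s⟩
    · rfl
    · exact absurd hLM.symm (ocfEval_cons_ne_zero hM)
  | cons p t ih =>
    obtain ⟨e, a⟩ := p
    rcases M with _ | ⟨⟨f, b⟩, s⟩
    · exact absurd hLM (ocfEval_cons_ne_zero hL)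
    have hDL := (one_le_add_ocfEval hL).1
    have hDM := (one_le_add_ocfEval hM).1
    have hsL := sign_mul_ocfEval_cons hL
    have hsM := sign_mul_ocfEval_cons hM
    rw [← hLM] at hsM
    have hef : e = f := by
      have : 0 < ((a : ℚ) + ocfEval t)⁻¹ := by positivity
      have : 0 < ((b : ℚ) + ocfEval s)⁻¹ := by positivity
      rcases ocfValid_sign hL with rfl | rfl <;> rcases ocfValid_sign hM with rfl | rfl <;>
        first | rfl | (push_cast at hsL hsM; linarith)
    subst hef
    have hD : (a : ℚ) + ocfEval t = b + ocfEval s := inv_injective (hsL.symm.trans hsM)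
    have hab : a = b := by
      obtain ⟨ht₀, ht₁⟩ := ocfEval_mem_Ioc (ocfValid_tail hL)
      obtain ⟨hs₀, hs₁⟩ := ocfEval_mem_Ioc (ocfValid_tail hM)
      have h₁ : (a : ℤ) < b + 2 := by exact_mod_cast (by linarith : (a : ℚ) < b + 2)
      have h₂ : (b : ℤ) < a + 2 := by exact_mod_cast (by linarith : (b : ℚ) < a + 2)
      obtain ⟨i, rfl⟩ := ocfValid_odd hL
      obtain ⟨j, rfl⟩ := ocfValid_odd hM
      omega
    subst hab
    rw [ih (ocfValid_tail hL) (ocfValid_tail hM) (by linarith)]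

theorem natAbs_num_lt_den_of_abs_lt_one {q : ℚ} (hq : |q| < 1) : q.num.natAbs < q.den := by
  have := Rat.num_lt_denom_iff.2 hq
  rw [Rat.num_abs_eq_abs_num, Rat.den_abs_eq_den, Int.abs_eq_natAbs] at this
  exact_mod_cast this

theorem ZeroRep.unique {x : ℚ} {L M : List (ℤ × ℕ)} (hL : ZeroRep x L) (hM : ZeroRep x M) : L = M :=
  ocfEval_injOn hL.1 hM.1 (hL.2.2.symm.trans hM.2.2)

theorem Szero_eq_qsum {x : ℚ} {L : List (ℤ × ℕ)} (h : ZeroRep x L) : Szero x = qsum L := by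
  have : {M | ZeroRep x M} = {L} :=
    Set.eq_singleton_iff_unique_mem.2 ⟨h, fun _ hM => ZeroRep.unique hM h⟩
  rw [Szero, this, Set.image_singleton, csInf_singleton]

def negHead : List (ℤ × ℕ) → List (ℤ × ℕ)
  | [] => []
  | (e, a) :: t => (-e, a) :: t

theorem zeroRep_nil : ZeroRep 0 [] := ⟨trivial, by simp, rfl⟩

theorem ZeroRep.cons_one {w : ℚ} {T : List (ℤ × ℕ)} (hT : ZeroRep w T) {a : ℕ} (ha : Odd a) :
    ZeroRep (1 / (a + w)) ((1, a) :: T) := by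
  obtain ⟨hTv, hT₁, rfl⟩ := hT
  refine ⟨ocfValid_cons_iff.2 ⟨Or.inl rfl, ha, ha.pos, fun _ _ => rfl, ?_, hTv⟩, by simp,
    by simp [ocfEval]⟩
  rcases T with _ | ⟨⟨e, b⟩, u⟩
  · simp
  · have := ha.pos
    simp [hT₁ e b u rfl]
    omega

theorem ZeroRep.cons_neg_one {w : ℚ} {T : List (ℤ × ℕ)} (hT : ZeroRep w T) (hw : w < 1) {a : ℕ}
    (ha : Odd a) (ha₃ : 3 ≤ a) : ZeroRep (1 / (a - w)) ((1, a) :: negHead T) := by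
  obtain ⟨hTv, hT₁, rfl⟩ := hT
  rcases T with _ | ⟨⟨e, b⟩, u⟩
  · simpa [ocfEval, negHead] using ZeroRep.cons_one zeroRep_nil ha
  obtain rfl := hT₁ e b u rfl
  have hne : u = [] → b ≠ 1 := by
    rintro rfl rfl
    norm_num [ocfEval] at hw
  refine ⟨⟨Or.inl rfl, ha, by omega, by omega, ocfValid_neg_one_cons_iff.2 ⟨hTv, hne⟩⟩,
    by simp, ?_⟩
  simp only [negHead, ocfEval]
  push_cast
  ring

theorem exists_zeroRep (x : ℚ) (hx₀ : 0 ≤ x) (hx₁ : x ≤ 1) : ∃ L, ZeroRep x L := by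
  induction hn : x.num.natAbs using Nat.strong_induction_on generalizing x with
  | _ n ih =>
  rcases hx₀.eq_or_lt with rfl | hx
  · exact ⟨[], zeroRep_nil⟩
  set y := x⁻¹ with hy
  have hy₁ : 1 ≤ y := (one_le_inv₀ hx).2 hx₁
  set k := ⌊y⌋₊
  have hky : (k : ℚ) ≤ y := Nat.floor_le (by linarith)
  have hyk : y < k + 1 := Nat.lt_floor_add_one y
  have hk : 1 ≤ k := Nat.le_floor (by simpa using hy₁)
  have hxy : x = 1 / y := by rw [hy, one_div, inv_inv]
  -- both remainders below have the denominator `y.den = x.num.natAbs`, so the induction goes down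
  have hrec : ∀ w : ℚ, 0 ≤ w → w < 1 → w.den = y.den → ∃ T, ZeroRep w T := by
    intro w hw₀ hw₁ hden
    refine ih _ ?_ w hw₀ hw₁.le rfl
    calc w.num.natAbs < w.den := natAbs_num_lt_den_of_abs_lt_one (abs_lt.2 ⟨by linarith, hw₁⟩)
      _ = n := by rw [hden, hy, Rat.den_inv_of_ne_zero hx.ne', hn]
  rcases Nat.even_or_odd k with hev | hodd
  · have hk₂ : 2 ≤ k := by obtain ⟨j, hj⟩ := hev; omega
    rcases hky.eq_or_lt with hky | hky
    · have hx' : x = 1 / ((k - 1 : ℕ) + 1 / ((1 : ℕ) + 0)) := by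
        rw [hxy, ← hky, Nat.cast_sub (by omega)]
        norm_num
      exact ⟨_, hx' ▸ ZeroRep.cons_one (ZeroRep.cons_one zeroRep_nil odd_one)
        (Nat.Even.sub_odd (by omega) hev odd_one)⟩
    · obtain ⟨T, hT⟩ := hrec (k + 1 - y) (by linarith) (by linarith)
        (by rw [← Rat.den_neg_eq_den, neg_sub, ← Nat.cast_add_one, Rat.sub_natCast_den])
      have hx' : x = 1 / ((k + 1 : ℕ) - (k + 1 - y)) := by rw [hxy]; push_cast; ring
      exact ⟨_, hx' ▸ ZeroRep.cons_neg_one hT (by linarith) hev.add_one (by omega)⟩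
  · obtain ⟨T, hT⟩ := hrec (y - k) (by linarith) (by linarith) (Rat.sub_natCast_den _ _)
    have hx' : x = 1 / (k + (y - k)) := by rw [hxy]; ring
    exact ⟨_, hx' ▸ ZeroRep.cons_one hT hodd⟩

theorem qsum_cons (e : ℤ) (a : ℕ) (t : List (ℤ × ℕ)) : qsum ((e, a) :: t) = a + qsum t := by
  simp [qsum]

def withLead (e : ℤ) (k : ℕ) : Set (List (ℤ × ℕ)) :=
  {L | ocfValid L ∧ qsum L ≤ k ∧ ∃ a t, L = (e, a) :: t}

theorem finite_setOf_ocfValid_qsum_le (k : ℕ) : {L | ocfValid L ∧ qsum L ≤ k}.Finite := by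
  induction k with
  | zero =>
    refine (Set.finite_singleton []).subset ?_
    rintro (_ | ⟨⟨e, a⟩, t⟩) ⟨hv, hq⟩
    · rfl
    · have := ocfValid_pos hv; rw [qsum_cons] at hq; omega
  | succ k ih =>
    refine (((Set.toFinite {1, -1}).prod (Set.finite_Icc 1 (k + 1))).image2 List.cons ih
      |>.insert []).subset ?_
    rintro (_ | ⟨⟨e, a⟩, t⟩) ⟨hv, hq⟩
    · exact Set.mem_insert _ _
    · have := ocfValid_pos hv
      rw [qsum_cons] at hq
      exact Or.inr ⟨(e, a), ⟨ocfValid_sign hv, by simp; omega⟩, t, ⟨ocfValid_tail hv, by omega⟩,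
        rfl⟩

instance (e : ℤ) (k : ℕ) : Finite (withLead e k) :=
  ((finite_setOf_ocfValid_qsum_le k).subset fun _ hL => ⟨hL.1, hL.2.1⟩).to_subtype

theorem Yset_eq_image (n : ℕ) : Yset n = ocfEval '' insert [] (withLead 1 (n + 1)) := by
  ext x
  constructor
  · rintro ⟨hx₀, hx₁, hS⟩
    obtain ⟨L, hL⟩ := exists_zeroRep x hx₀ hx₁
    refine ⟨L, ?_, hL.2.2.symm⟩
    rcases L with _ | ⟨⟨e, a⟩, t⟩
    · exact Set.mem_insert _ _
    · obtain rfl := hL.2.1 e a t rfl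
      exact Or.inr ⟨hL.1, Szero_eq_qsum hL ▸ hS, a, t, rfl⟩
  · rintro ⟨L, hL | ⟨hv, hq, a, t, rfl⟩, rfl⟩
    · subst hL
      have : Szero 0 = 0 := Szero_eq_qsum zeroRep_nil
      simp [Yset, ocfEval, this]
    · have hrep : ZeroRep (ocfEval ((1, a) :: t)) ((1, a) :: t) :=
        ⟨hv, fun _ _ _ h => (Prod.ext_iff.1 (List.cons_eq_cons.1 h).1).1.symm, rfl⟩
      exact ⟨(ocfEval_pos hv).le, (ocfEval_mem_Ioc hv).2, Szero_eq_qsum hrep ▸ hq⟩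

theorem Ycard_eq (n : ℕ) : Ycard n = (withLead 1 (n + 1)).ncard + 1 := by
  have hinj : Set.InjOn ocfEval (insert [] (withLead 1 (n + 1))) :=
    ocfEval_injOn.mono (by rintro L (rfl | hL); exacts [trivial, hL.1])
  rw [Ycard, Yset_eq_image, hinj.ncard_image,
    Set.ncard_insert_of_notMem (by simp [withLead])]

theorem negHead_involutive : Function.Involutive negHead := by
  rintro (_ | ⟨⟨e, a⟩, t⟩) <;> simp [negHead]

theorem withLead_one_eq_insert_image_negHead {k : ℕ} (hk : 1 ≤ k) :
    withLead 1 k = insert [(1, 1)] (negHead '' withLead (-1) k) := by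
  ext L
  constructor
  · rintro ⟨hv, hq, a, t, rfl⟩
    by_cases h : t = [] ∧ a = 1
    · obtain ⟨rfl, rfl⟩ := h
      exact Set.mem_insert _ _
    · refine Or.inr ⟨(-1, a) :: t, ⟨ocfValid_neg_one_cons_iff.2 ⟨hv, fun ht ha => h ⟨ht, ha⟩⟩,
        by rwa [qsum_cons] at hq ⊢, a, t, rfl⟩, by simp [negHead]⟩
  · rintro (rfl | ⟨_, ⟨hv, hq, a, t, rfl⟩, rfl⟩)
    · exact ⟨by simp [ocfValid], by simpa [qsum] using hk, 1, [], rfl⟩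
    · simp only [negHead, neg_neg]
      exact ⟨(ocfValid_neg_one_cons_iff.1 hv).1, by rwa [qsum_cons] at hq ⊢, a, t, rfl⟩

theorem ncard_withLead_neg_one_add_one {k : ℕ} (hk : 1 ≤ k) :
    (withLead (-1) k).ncard + 1 = (withLead 1 k).ncard := by
  have hnotMem : [(1, 1)] ∉ negHead '' withLead (-1) k := by
    rintro ⟨_, ⟨hv, -, a, t, rfl⟩, h⟩
    simp only [negHead, neg_neg, List.cons.injEq, Prod.mk.injEq, true_and] at h
    obtain ⟨rfl, rfl⟩ := h
    exact absurd (ocfValid_sign_eq_one_of_singleton hv) (by norm_num)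
  rw [withLead_one_eq_insert_image_negHead hk,
    Set.ncard_insert_of_notMem hnotMem,
    negHead_involutive.injective.injOn.ncard_image]

def bumpHead : List (ℤ × ℕ) → List (ℤ × ℕ)
  | [] => []
  | (e, a) :: t => (e, a + 2) :: t

theorem bumpHead_injective : Function.Injective bumpHead := by
  rintro (_ | ⟨⟨e, a⟩, t⟩) (_ | ⟨⟨f, b⟩, s⟩) h <;> simp_all [bumpHead]

theorem ocfValid_one_cons_add_two {a : ℕ} {t : List (ℤ × ℕ)} (h : ocfValid ((1, a) :: t)) :
    ocfValid ((1, a + 2) :: t) := by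
  obtain ⟨-, ha, -, -, hc, ht⟩ := ocfValid_cons_iff.1 h
  refine ocfValid_cons_iff.2 ⟨Or.inl rfl, ha.add_even even_two, by omega, by omega,
    fun p hp => ?_, ht⟩
  have := hc p hp
  push_cast
  omega

theorem ocfValid_one_cons_of_add_two {a : ℕ} {t : List (ℤ × ℕ)} (h : ocfValid ((1, a + 2) :: t))
    (ht : a = 1 → ∀ p ∈ t.head?, p.1 = 1) : ocfValid ((1, a) :: t) := by
  obtain ⟨-, ha, -, -, hc, ht'⟩ := ocfValid_cons_iff.1 h
  obtain ⟨j, hj⟩ : Odd a := by simpa [parity_simps] using ha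
  refine ocfValid_cons_iff.2 ⟨Or.inl rfl, ⟨j, hj⟩, by omega, fun _ _ => rfl, fun p hp => ?_, ht'⟩
  obtain ⟨u, rfl⟩ : ∃ u, t = p :: u := by rcases t with _ | ⟨q, u⟩ <;> simp_all
  have := hc p hp
  rcases ocfValid_sign ht' with hp₁ | hp₁
  · omega
  · have : a ≠ 1 := fun ha₁ => by simp_all
    omega

/-- Either the leading partial quotient `a` is `1`, or `a ≥ 3` and lowering it to `a - 2` keeps
the expansion valid, or `a = 3` and the next sign is `-1`. -/
theorem withLead_one_add_three (k : ℕ) :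
    withLead 1 (k + 3) = insert [(1, 1)] (List.cons (1, 1) '' withLead 1 (k + 2)) ∪
      bumpHead '' withLead 1 (k + 1) ∪ List.cons (1, 3) '' withLead (-1) k := by
  ext L
  constructor
  · rintro ⟨hv, hq, a, t, rfl⟩
    rw [qsum_cons] at hq
    obtain ⟨j, rfl⟩ := ocfValid_odd hv
    rcases j with _ | j
    · rcases t with _ | ⟨⟨e', b⟩, u⟩
      · exact Or.inl (Or.inl (Or.inl rfl))
      · obtain rfl : e' = 1 := by
          have := ocfValid_two_le_add hv
          rcases ocfValid_sign (ocfValid_tail hv) with rfl | rfl <;> simp_all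
        exact Or.inl (Or.inl (Or.inr ⟨_, ⟨ocfValid_tail hv, by omega, b, u, rfl⟩, rfl⟩))
    · by_cases hneg : j = 0 ∧ ∃ b u, t = (-1, b) :: u
      · obtain ⟨rfl, b, u, rfl⟩ := hneg
        exact Or.inr ⟨_, ⟨ocfValid_tail hv, by omega, b, u, rfl⟩, rfl⟩
      refine Or.inl (Or.inr ⟨(1, 2 * j + 1) :: t, ⟨ocfValid_one_cons_of_add_two hv ?_,
        by rw [qsum_cons]; omega, _, _, rfl⟩, rfl⟩)
      rintro hj ⟨e', b⟩ hp
      obtain ⟨u, rfl⟩ : ∃ u, t = (e', b) :: u := by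
        rcases t with _ | ⟨q, u⟩ <;> simp_all
      rcases ocfValid_sign (ocfValid_tail hv) with rfl | rfl
      · rfl
      · exact absurd ⟨by omega, b, u, rfl⟩ hneg
  · rintro (((rfl | ⟨_, ⟨hv, hq, b, u, rfl⟩, rfl⟩) | ⟨_, ⟨hv, hq, a, t, rfl⟩, rfl⟩) |
      ⟨_, ⟨hv, hq, b, u, rfl⟩, rfl⟩)
    · exact ⟨by simp [ocfValid], by simp [qsum], 1, [], rfl⟩
    · exact ⟨⟨Or.inl rfl, odd_one, one_pos, by norm_num, hv⟩,
        by simp only [qsum_cons] at hq ⊢; omega, _, _, rfl⟩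
    · exact ⟨ocfValid_one_cons_add_two hv, by rw [bumpHead, qsum_cons] at *; omega, _, _, rfl⟩
    · exact ⟨⟨Or.inl rfl, ⟨1, rfl⟩, by norm_num, by norm_num, hv⟩,
        by simp only [qsum_cons] at hq ⊢; omega, _, _, rfl⟩

theorem ncard_withLead_one_add_four (k : ℕ) :
    (withLead 1 (k + 4)).ncard =
      (withLead 1 (k + 3)).ncard + (withLead 1 (k + 2)).ncard + (withLead 1 (k + 1)).ncard := by
  have h₁ : [(1, 1)] ∉ List.cons (1, 1) '' withLead 1 (k + 3) := by
    rintro ⟨_, ⟨-, -, a, t, rfl⟩, h⟩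
    simp at h
  have h₂ : Disjoint (insert [(1, 1)] (List.cons (1, 1) '' withLead 1 (k + 3)))
      (bumpHead '' withLead 1 (k + 2)) := by
    rw [Set.disjoint_left]
    rintro _ (rfl | ⟨_, -, rfl⟩) ⟨_, ⟨-, -, a, t, rfl⟩, h⟩ <;> simp [bumpHead] at h
  have h₃ : Disjoint (insert [(1, 1)] (List.cons (1, 1) '' withLead 1 (k + 3)) ∪
      bumpHead '' withLead 1 (k + 2)) (List.cons (1, 3) '' withLead (-1) (k + 1)) := by
    rw [Set.disjoint_left]
    rintro _ ((rfl | ⟨_, -, rfl⟩) | ⟨_, ⟨hv, -, a, t, rfl⟩, rfl⟩) ⟨_, ⟨-, -, b, u, rfl⟩, h'⟩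
    · simp at h'
    · simp at h'
    · simp only [bumpHead, List.cons.injEq, Prod.mk.injEq, true_and] at h'
      obtain ⟨ha, rfl⟩ := h'
      obtain rfl : a = 1 := by omega
      exact absurd (ocfValid_two_le_add hv) (by norm_num)
  rw [withLead_one_add_three (k + 1), Set.ncard_union_eq h₃, Set.ncard_union_eq h₂,
    Set.ncard_insert_of_notMem h₁, List.cons_injective.injOn.ncard_image,
    bumpHead_injective.injOn.ncard_image, List.cons_injective.injOn.ncard_image,
    ← ncard_withLead_neg_one_add_one (by omega : 1 ≤ k + 1)]
  ring

theorem one_lt_of_tribonacci_eq {lam : ℝ} (h : lam ^ 3 - lam ^ 2 - lam - 1 = 0) : 1 < lam := by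
  nlinarith [sq_nonneg lam, sq_nonneg (lam - 1), sq_nonneg (lam + 1)]

/-- The characteristic roots `μ` of this recurrence are the two other roots of `x³ - x² - x - 1`
(`μ + μ' = 1 - λ`, `μ μ' = λ⁻¹`). Solutions decay because the positive definite form
`λ s² + λ(λ-1) s u + u²` at `(v_{n+1}, v_n)` is multiplied by `λ⁻¹` at each step. -/
theorem tendsto_zero_of_conjugate_roots_rec {lam : ℝ} (hlam : lam ^ 3 - lam ^ 2 - lam - 1 = 0)
    {v : ℕ → ℝ} (hv : ∀ n, lam * v (n + 2) + lam * (lam - 1) * v (n + 1) + v n = 0) :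
    Tendsto v atTop (𝓝 0) := by
  have hl := one_lt_of_tribonacci_eq hlam
  set Q : ℕ → ℝ := fun n => lam * v (n + 1) ^ 2 + lam * (lam - 1) * v (n + 1) * v n + v n ^ 2
  have hQ : ∀ n, Q n = lam⁻¹ ^ n * Q 0 := by
    intro n
    induction n with
    | zero => simp
    | succ n ih =>
      have : lam * Q (n + 1) = Q n := by linear_combination (lam * v (n + 2) - v n) * hv n
      rw [pow_succ, mul_comm _ lam⁻¹, mul_assoc, ← ih, ← this, inv_mul_cancel_left₀ (by positivity)]
  -- positive definiteness, via `λ(λ-1)² = 2 - (λ-1)²`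
  have hsq : ∀ n, v n ^ 2 ≤ 2 * Q n := fun n => by
    nlinarith [mul_nonneg (by positivity : (0 : ℝ) ≤ lam)
        (sq_nonneg (v (n + 1) + (lam - 1) / 2 * v n)),
      sq_nonneg (v n), mul_nonneg (sq_nonneg (v n)) (sq_nonneg (lam - 1))]
  have hgeom : Tendsto (fun n => 2 * (lam⁻¹ ^ n * Q 0)) atTop (𝓝 0) := by
    simpa using ((tendsto_pow_atTop_nhds_zero_of_lt_one (by positivity)
      (inv_lt_one_of_one_lt₀ hl)).mul_const (Q 0)).const_mul 2
  have hv2 : Tendsto (fun n => v n ^ 2) atTop (𝓝 0) :=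
    squeeze_zero (fun n => sq_nonneg _) (fun n => (hsq n).trans_eq (by rw [hQ n])) hgeom
  rw [tendsto_zero_iff_abs_tendsto_zero]
  simpa [Function.comp_def, Real.sqrt_sq_eq_abs] using (Real.continuous_sqrt.tendsto 0).comp hv2

theorem tendsto_succ_sub_mul_of_tribonacci {lam : ℝ} (hlam : lam ^ 3 - lam ^ 2 - lam - 1 = 0)
    {r : ℕ → ℝ} (hr : ∀ n, r (n + 3) = r (n + 2) + r (n + 1) + r n) :
    Tendsto (fun n => r (n + 1) - lam * r n) atTop (𝓝 0) :=
  tendsto_zero_of_conjugate_roots_rec hlam fun n => by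
    linear_combination lam * hr n - r (n + 1) * hlam

theorem tendsto_atTop_of_tribonacci {r : ℕ → ℝ} (hr : ∀ n, r (n + 3) = r (n + 2) + r (n + 1) + r n)
    (hr₁ : ∀ n, 1 ≤ r n) : Tendsto r atTop atTop := by
  have hlin : ∀ n : ℕ, (n : ℝ) ≤ r (n + 2) := by
    intro n
    induction n with
    | zero => simpa using (zero_le_one.trans (hr₁ 2))
    | succ n ih => push_cast; linarith [hr n, hr₁ n, hr₁ (n + 1)]
  exact (tendsto_add_atTop_iff_nat 2).1 (tendsto_atTop_mono hlin tendsto_natCast_atTop_atTop)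

theorem tendsto_div_of_tendsto_sub_mul {r f g : ℕ → ℝ} {a c β δ : ℝ} (hr : Tendsto r atTop atTop)
    (hf : Tendsto (fun n => f n - a * r n) atTop (𝓝 β))
    (hg : Tendsto (fun n => g n - c * r n) atTop (𝓝 δ)) (hc : c ≠ 0) :
    Tendsto (fun n => f n / g n) atTop (𝓝 (a / c)) := by
  have hf' : Tendsto (fun n => a + (f n - a * r n) / r n) atTop (𝓝 a) := by
    simpa using (hf.div_atTop hr).const_add a
  have hg' : Tendsto (fun n => c + (g n - c * r n) / r n) atTop (𝓝 c) := by
    simpa using (hg.div_atTop hr).const_add c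
  refine (hf'.div hg' hc).congr' ?_
  filter_upwards [hr.eventually_gt_atTop 0] with n hn
  simp only [Pi.div_apply]
  rw [← div_div_div_cancel_right₀ hn.ne' (f n)]
  congr 1 <;> field_simp <;> ring

theorem tendsto_succ_sub_mul {r f : ℕ → ℝ} {lam a β : ℝ}
    (hr : Tendsto (fun n => r (n + 1) - lam * r n) atTop (𝓝 0))
    (hf : Tendsto (fun n => f n - a * r n) atTop (𝓝 β)) :
    Tendsto (fun n => f (n + 1) - a * lam * r n) atTop (𝓝 β) := by
  have := ((tendsto_add_atTop_iff_nat 1).2 hf).add (hr.const_mul a)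
  rw [mul_zero, add_zero] at this
  exact this.congr fun n => by ring

end OCF

/-- **Proposition 5.** Let `λ` be the unique real root of `λ³ − λ² − λ − 1 = 0` and
`Z_n = Y_{n+1} − Y_n − 1`. Then `lim_{n→∞} Y_n / Y_{n+1} = 1/λ`,
`lim_{n→∞} Z_n / Z_{n+1} = 1/λ`, and `lim_{n→∞} Y_n / Z_n = 1/(λ − 1)`. -/
theorem thm12 (lam : ℝ) (hlam : lam ^ 3 - lam ^ 2 - lam - 1 = 0) :
    Tendsto (fun n => (Ycard n : ℝ) / (Ycard (n + 1) : ℝ)) atTop (𝓝 (1 / lam)) ∧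
    Tendsto (fun n => (Zcard n : ℝ) / (Zcard (n + 1) : ℝ)) atTop (𝓝 (1 / lam)) ∧
    Tendsto (fun n => (Ycard n : ℝ) / (Zcard n : ℝ)) atTop (𝓝 (1 / (lam - 1))) := by
  set r : ℕ → ℝ := fun n => ((OCF.withLead 1 (n + 1)).ncard : ℝ)
  have hY (n : ℕ) : (Ycard n : ℝ) = r n + 1 := by simp [r, OCF.Ycard_eq]
  have hZ (n : ℕ) : (Zcard n : ℝ) = r (n + 1) - r n - 1 := by simp [Zcard, hY]
  have hrec (n : ℕ) : r (n + 3) = r (n + 2) + r (n + 1) + r n := by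
    simp only [r]; exact_mod_cast OCF.ncard_withLead_one_add_four n
  have hr₁ (n : ℕ) : 1 ≤ r n := by
    simp only [r, ← OCF.ncard_withLead_neg_one_add_one (Nat.le_add_left 1 n)]
    exact_mod_cast Nat.le_add_left 1 _
  have hrtop := OCF.tendsto_atTop_of_tribonacci hrec hr₁
  have hu := OCF.tendsto_succ_sub_mul_of_tribonacci hlam hrec
  have hl := OCF.one_lt_of_tribonacci_eq hlam
  have hYr : Tendsto (fun n => (Ycard n : ℝ) - 1 * r n) atTop (𝓝 1) := by simp [hY]
  have hZr : Tendsto (fun n => (Zcard n : ℝ) - (lam - 1) * r n) atTop (𝓝 (-1)) := by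
    simpa using (hu.sub_const 1).congr fun n => by rw [hZ]; ring
  refine ⟨?_, ?_, ?_⟩
  · simpa using OCF.tendsto_div_of_tendsto_sub_mul hrtop hYr (OCF.tendsto_succ_sub_mul hu hYr)
      (by positivity)
  · have := OCF.tendsto_div_of_tendsto_sub_mul hrtop hZr (OCF.tendsto_succ_sub_mul hu hZr)
      (mul_ne_zero (by linarith) (by positivity))
    rwa [div_mul_cancel_left₀ (by linarith), ← one_div] at this
  · simpa using OCF.tendsto_div_of_tendsto_sub_mul hrtop hYr hZr (by linarith)
end
end
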